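/- arXiv:1607.02986 — 2 statements merged into one kernel-verified Lean document; each statement's English description precedes it below -/
import Mathlib

section
/- Let G = (X, Y, Q, Σ_X, Σ_Y, P) be a two-prover game in which Q is the uniform distribution over a set E ⊆ X × Y, and let r, k, l be integers with r ≤ k ≤ |X| and r ≤ l ≤ |Y| such that the set E^r_set is nonempty. Then val(G^{k×l}_em) ≤ val(G^{⊗r}_set). -/
open Finset

attribute [local instance] Classical.propDecidable

noncomputable section

/-- The value of a two-prover game with question sets `QX`, `QY`, answer sets `AX`, `AY`,
question distribution `Q` and verification predicate `P`. -/
def gameVal {QX QY AX AY : Type*} [Fintype QX] [Fintype QY] [Fintype AX] [Fintype AY]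
    [Nonempty AX] [Nonempty AY] (Q : QX → QY → ℝ) (P : QX → QY → AX → AY → Prop) : ℝ :=
  (Finset.univ : Finset ((QX → AX) × (QY → AY))).sup'
    ⟨(fun _ => Classical.arbitrary AX, fun _ => Classical.arbitrary AY), Finset.mem_univ _⟩
    fun φ => ∑ x : QX, ∑ y : QY, Q x y * (if P x y (φ.1 x) (φ.2 y) then 1 else 0)

lemma aux_le_gameVal {QX QY AX AY : Type*} [Fintype QX] [Fintype QY] [Fintype AX] [Fintype AY]
    [Nonempty AX] [Nonempty AY] (Q : QX → QY → ℝ) (P : QX → QY → AX → AY → Prop)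
    (φ : (QX → AX) × (QY → AY)) :
    (∑ x : QX, ∑ y : QY, Q x y * (if P x y (φ.1 x) (φ.2 y) then 1 else 0)) ≤ gameVal Q P := by
  rw [gameVal]
  exact Finset.le_sup'
    (fun φ : (QX → AX) × (QY → AY) =>
      ∑ x : QX, ∑ y : QY, Q x y * (if P x y (φ.1 x) (φ.2 y) then 1 else 0))
    (Finset.mem_univ φ)

/-- The uniform distribution over a finite set `E` of question pairs. -/
def unifOn {QX QY : Type*} (E : Finset (QX × QY)) : QX → QY → ℝ :=
  fun x y => if (x, y) ∈ E then (E.card : ℝ)⁻¹ else 0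

/-- Maximum degree of a vertex in the bipartite graph `(X, Y, E)`. -/
def maxDeg {X Y : Type*} [Fintype X] [Fintype Y] (E : Finset (X × Y)) : ℕ :=
  max (Finset.univ.sup fun x : X => (E.filter fun e => e.1 = x).card)
      (Finset.univ.sup fun y : Y => (E.filter fun e => e.2 = y).card)

/-- The predicate of a birthday-repetition game: all edges between `S` and `T` must be
answered acceptably. -/
def bPred {X Y AX AY : Type*} (E : Finset (X × Y)) (P : X → Y → AX → AY → Prop) :
    Finset X → Finset Y → (X → AX) → (Y → AY) → Prop :=
  fun S T a b => ∀ x ∈ S, ∀ y ∈ T, (x, y) ∈ E → P x y (a x) (b y)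

/-- Value of the `(k × l)`-birthday repetition `G^{k×l}`: questions are uniformly random
`k`-subsets of `X` and `l`-subsets of `Y`. -/
def birthdayVal {X Y AX AY : Type*} [Fintype X] [Fintype Y] [Fintype AX] [Fintype AY]
    [Nonempty AX] [Nonempty AY] (E : Finset (X × Y)) (P : X → Y → AX → AY → Prop)
    (k l : ℕ) : ℝ :=
  gameVal
    (fun (S : Finset X) (T : Finset Y) =>
      if S.card = k ∧ T.card = l then
        (((Fintype.card X).choose k : ℝ) * ((Fintype.card Y).choose l : ℝ))⁻¹
      else 0)
    (bPred E P)

/-- Value of the `r`-fold parallel repetition `G^{⊗r}`. -/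
def parVal {X Y AX AY : Type*} [Fintype X] [Fintype Y] [Fintype AX] [Fintype AY]
    [Nonempty AX] [Nonempty AY] (Q : X → Y → ℝ) (P : X → Y → AX → AY → Prop) (r : ℕ) : ℝ :=
  gameVal (fun (xs : Fin r → X) (ys : Fin r → Y) => ∏ i, Q (xs i) (ys i))
    (fun xs ys (a : Fin r → AX) (b : Fin r → AY) => ∀ i, P (xs i) (ys i) (a i) (b i))

/-- `E^r_set` : tuples of `r` edges of `E` whose endpoints are all distinct. -/
def ErSet {X Y : Type*} [Fintype X] [Fintype Y] (E : Finset (X × Y)) (r : ℕ) :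
    Finset ((Fin r → X) × (Fin r → Y)) :=
  Finset.univ.filter fun p =>
    (∀ i, (p.1 i, p.2 i) ∈ E) ∧ Function.Injective p.1 ∧ Function.Injective p.2

/-- Value of `G^{⊗r}_set are`, the parallel repetition with question distribution uniform
over `E^r_set`. -/
def parSetVal {X Y AX AY : Type*} [Fintype X] [Fintype Y] [Fintype AX] [Fintype AY]
    [Nonempty AX] [Nonempty AY] (E : Finset (X × Y)) (P : X → Y → AX → AY → Prop)
    (r : ℕ) : ℝ :=
  gameVal (fun xs ys => if (xs, ys) ∈ ErSet E r then ((ErSet E r).card : ℝ)⁻¹ else 0)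
    (fun xs ys (a : Fin r → AX) (b : Fin r → AY) => ∀ i, P (xs i) (ys i) (a i) (b i))

/-- The distribution `Q^{k×l}_em`: sample a tuple of `r` disjoint edges uniformly from
`E^r_set`, then complete the endpoints to a uniformly random `k`-subset of `X` and
`l`-subset of `Y`. -/
def Qem {X Y : Type*} [Fintype X] [Fintype Y] (E : Finset (X × Y)) (r k l : ℕ) :
    Finset X → Finset Y → ℝ :=
  fun S T =>
    ((ErSet E r).card : ℝ)⁻¹ *
      ∑ p ∈ ErSet E r,
        (if S.card = k ∧ T.card = l ∧ (∀ i, p.1 i ∈ S) ∧ (∀ i, p.2 i ∈ T) then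
            (((Fintype.card X - r).choose (k - r) : ℝ) *
              ((Fintype.card Y - r).choose (l - r) : ℝ))⁻¹
          else 0)

/-- Value of `G^{k×l}_em`. -/
def birthdayEmVal {X Y AX AY : Type*} [Fintype X] [Fintype Y] [Fintype AX] [Fintype AY]
    [Nonempty AX] [Nonempty AY] (E : Finset (X × Y)) (P : X → Y → AX → AY → Prop)
    (r k l : ℕ) : ℝ :=
  gameVal (Qem E r k l) (bPred E P)

/-- `|E(S, T)|`, the number of edges between `S` and `T`. -/
def edgeCount {X Y : Type*} (E : Finset (X × Y)) (S : Finset X) (T : Finset Y) : ℕ :=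
  (E.filter fun e => e.1 ∈ S ∧ e.2 ∈ T).card

/-- The event `(1 - δ)·s ≤ |E(S,T)| ≤ (1 + δ)·s`. -/
def inRange {X Y : Type*} (E : Finset (X × Y)) (s δ : ℝ) (S : Finset X) (T : Finset Y) :
    Prop :=
  (1 - δ) * s ≤ (edgeCount E S T : ℝ) ∧ (edgeCount E S T : ℝ) ≤ (1 + δ) * s

/-- Conditioning a distribution on an event `A`. -/
def condOn {QX QY : Type*} [Fintype QX] [Fintype QY] (Q : QX → QY → ℝ)
    (A : QX → QY → Prop) : QX → QY → ℝ :=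
  fun x y =>
    if A x y then Q x y / (∑ x' : QX, ∑ y' : QY, if A x' y' then Q x' y' else 0) else 0

/-- Value of `G^{k×l}_{em,[s₁,s₂]}`. -/
def birthdayEmCondVal {X Y AX AY : Type*} [Fintype X] [Fintype Y] [Fintype AX] [Fintype AY]
    [Nonempty AX] [Nonempty AY] (E : Finset (X × Y)) (P : X → Y → AX → AY → Prop)
    (r k l : ℕ) (s δ : ℝ) : ℝ :=
  gameVal (condOn (Qem E r k l) (inRange E s δ)) (bPred E P)

/-- The set `E^{k×l}_{[s₁,s₂]}` of pairs `(S, T)` with `|S| = k`, `|T| = l` and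
`(1-δ)·s ≤ |E(S,T)| ≤ (1+δ)·s`. -/
def rangeSet {X Y : Type*} [Fintype X] [Fintype Y] (E : Finset (X × Y)) (k l : ℕ)
    (s δ : ℝ) : Finset (Finset X × Finset Y) :=
  Finset.univ.filter fun p => p.1.card = k ∧ p.2.card = l ∧ inRange E s δ p.1 p.2

/-- Value of `G^{k×l}_{[s₁,s₂]}`. -/
def birthdayRangeVal {X Y AX AY : Type*} [Fintype X] [Fintype Y] [Fintype AX] [Fintype AY]
    [Nonempty AX] [Nonempty AY] (E : Finset (X × Y)) (P : X → Y → AX → AY → Prop)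
    (k l : ℕ) (s δ : ℝ) : ℝ :=
  gameVal
    (fun S T => if (S, T) ∈ rangeSet E k l s δ then ((rangeSet E k l s δ).card : ℝ)⁻¹ else 0)
    (bPred E P)


lemma aux_sum_ite_superset {α : Type*} [Fintype α] [DecidableEq α] (A : Finset α) (c : ℕ)
    (hc : A.card ≤ c) (h : Finset α → ℝ) :
    (∑ S : Finset α, if S.card = c ∧ A ⊆ S then h S else 0)
      = ∑ B ∈ (Finset.univ \ A).powersetCard (c - A.card), h (A ∪ B) := by
  classical
  rw [← Finset.sum_filter]
  refine Finset.sum_bij' (fun S _ => S \ A) (fun B _ => A ∪ B) ?_ ?_ ?_ ?_ ?_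
  · intro S hS
    rw [Finset.mem_filter] at hS
    rw [Finset.mem_powersetCard]
    exact ⟨Finset.sdiff_subset_sdiff (Finset.subset_univ _) le_rfl,
      by rw [Finset.card_sdiff_of_subset hS.2.2, hS.2.1]⟩
  · intro B hB
    rw [Finset.mem_powersetCard] at hB
    have hd : Disjoint A B := by
      rw [Finset.disjoint_left]
      intro x hx hxB
      exact (Finset.mem_sdiff.mp (hB.1 hxB)).2 hx
    rw [Finset.mem_filter]
    refine ⟨Finset.mem_univ _, ?_, Finset.subset_union_left⟩
    rw [Finset.card_union_of_disjoint hd, hB.2]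
    omega
  · intro S hS
    rw [Finset.mem_filter] at hS
    exact Finset.union_sdiff_of_subset hS.2.2
  · intro B hB
    rw [Finset.mem_powersetCard] at hB
    have hd : Disjoint A B := by
      rw [Finset.disjoint_left]
      intro x hx hxB
      exact (Finset.mem_sdiff.mp (hB.1 hxB)).2 hx
    exact Finset.union_sdiff_cancel_left hd
  · intro S hS
    rw [Finset.mem_filter] at hS
    rw [Finset.union_sdiff_of_subset hS.2.2]

lemma aux_marginal {ι κ : Type*} [Fintype ι] [DecidableEq ι] (D : ι → Finset κ)
    (i0 : ι) (h : κ → ℝ) :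
    ∑ g ∈ Fintype.piFinset D, h (g i0)
      = (∏ i ∈ Finset.univ.erase i0, ((D i).card : ℝ)) * ∑ B ∈ D i0, h B := by
  classical
  have hp := Finset.prod_univ_sum (fun i => D i) (fun i j => if i = i0 then h j else (1:ℝ))
  have h1 : ∀ g : ι → κ, (∏ i : ι, if i = i0 then h (g i) else (1:ℝ)) = h (g i0) := by
    intro g
    rw [Finset.prod_ite_eq' Finset.univ i0 (fun i => h (g i)), if_pos (Finset.mem_univ _)]
  rw [← Finset.mul_prod_erase Finset.univ _ (Finset.mem_univ i0)] at hp
  simp only [if_pos rfl, if_true, ite_true] at hp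
  have h2 : (∏ i ∈ Finset.univ.erase i0, ∑ j ∈ D i, if i = i0 then h j else (1:ℝ))
      = ∏ i ∈ Finset.univ.erase i0, ((D i).card : ℝ) := by
    refine Finset.prod_congr rfl fun i hi => ?_
    rw [Finset.sum_congr rfl fun j _ => if_neg (Finset.mem_erase.mp hi).1, Finset.sum_const,
      nsmul_eq_mul, mul_one]
  rw [h2] at hp
  calc ∑ g ∈ Fintype.piFinset D, h (g i0)
      = ∑ g ∈ Fintype.piFinset D, ∏ i : ι, if i = i0 then h (g i) else (1:ℝ) :=
        (Finset.sum_congr rfl fun g _ => (h1 g).symm)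
    _ = _ := by rw [← hp]; ring

lemma aux_marginal_inv {ι κ : Type*} [Fintype ι] [DecidableEq ι] (D : ι → Finset κ)
    (hpos : ∀ i, (D i).Nonempty) (i0 : ι) (h : κ → ℝ) :
    ((D i0).card : ℝ)⁻¹ * ∑ B ∈ D i0, h B
      = ((Fintype.piFinset D).card : ℝ)⁻¹ * ∑ g ∈ Fintype.piFinset D, h (g i0) := by
  classical
  rw [aux_marginal D i0 h, Fintype.card_piFinset]
  rw [← Finset.mul_prod_erase Finset.univ (fun i => (D i).card) (Finset.mem_univ i0)]
  push_cast
  have h1 : (∏ i ∈ Finset.univ.erase i0, ((D i).card : ℝ)) ≠ 0 :=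
    Finset.prod_ne_zero_iff.mpr fun i _ =>
      Nat.cast_ne_zero.mpr (Finset.card_ne_zero_of_mem (hpos i).choose_spec)
  rw [mul_inv]
  calc ((D i0).card : ℝ)⁻¹ * ∑ B ∈ D i0, h B
      = ((D i0).card : ℝ)⁻¹ * (((∏ i ∈ Finset.univ.erase i0, ((D i).card : ℝ))⁻¹ *
          (∏ i ∈ Finset.univ.erase i0, ((D i).card : ℝ))) * ∑ B ∈ D i0, h B) := by
        rw [inv_mul_cancel₀ h1, one_mul]
    _ = _ := by ring


set_option maxHeartbeats 2000000 in
/-- **Embedding step.**  For `r ≤ k ≤ |X|` and `r ≤ l ≤ |Y|` with `E^r_set ≠ ∅`,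
`val(G^{k×l}_em) ≤ val(G^{⊗r}_set)`. -/
theorem birthdayEmVal_le_parSetVal {X Y AX AY : Type*}
    [Fintype X] [Fintype Y] [Fintype AX] [Fintype AY] [Nonempty AX] [Nonempty AY]
    (E : Finset (X × Y)) (hE : E.Nonempty) (P : X → Y → AX → AY → Prop)
    (r k l : ℕ) (hrk : r ≤ k) (hkX : k ≤ Fintype.card X)
    (hrl : r ≤ l) (hlY : l ≤ Fintype.card Y)
    (hne : (ErSet E r).Nonempty) :
    birthdayEmVal E P r k l ≤ parSetVal E P r := by
  classical
  rw [birthdayEmVal, gameVal]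
  apply Finset.sup'_le
  rintro ⟨a, b⟩ -
  dsimp only
  have h01 : ∀ q : Prop, (0:ℝ) ≤ (if q then (1:ℝ) else 0) := fun q => by
    split_ifs <;> norm_num
  have hc0 : (0:ℝ) ≤ (((Fintype.card X - r).choose (k - r) : ℝ) * ((Fintype.card Y - r).choose (l - r) : ℝ))⁻¹ := by positivity
  have hErmem : ∀ p ∈ ErSet E r,
      (∀ i, (p.1 i, p.2 i) ∈ E) ∧ Function.Injective p.1 ∧ Function.Injective p.2 := by
    intro p hp
    simpa [ErSet] using hp
  have hcardX : ∀ p ∈ ErSet E r, (Finset.image p.1 Finset.univ).card = r := by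
    intro p hp
    rw [Finset.card_image_of_injective _ (hErmem p hp).2.1, Finset.card_univ, Fintype.card_fin]
  have hcardY : ∀ p ∈ ErSet E r, (Finset.image p.2 Finset.univ).card = r := by
    intro p hp
    rw [Finset.card_image_of_injective _ (hErmem p hp).2.2, Finset.card_univ, Fintype.card_fin]
  have hDXcard : ∀ p ∈ ErSet E r, ((Finset.univ \ Finset.image p.1 Finset.univ).powersetCard (k - r)).card = (Fintype.card X - r).choose (k - r) := by
    intro p hp
    rw [Finset.card_powersetCard, Finset.card_sdiff_of_subset (Finset.subset_univ _), Finset.card_univ,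
      hcardX p hp]
  have hDYcard : ∀ p ∈ ErSet E r, ((Finset.univ \ Finset.image p.2 Finset.univ).powersetCard (l - r)).card = (Fintype.card Y - r).choose (l - r) := by
    intro p hp
    rw [Finset.card_powersetCard, Finset.card_sdiff_of_subset (Finset.subset_univ _), Finset.card_univ,
      hcardY p hp]
  have hDXne : ∀ xs : Fin r → X,
      ((Finset.univ \ Finset.image xs Finset.univ).powersetCard (k - r)).Nonempty := by
    intro xs
    rw [Finset.powersetCard_nonempty, Finset.card_sdiff_of_subset (Finset.subset_univ _), Finset.card_univ]
    have h1 : (Finset.image xs Finset.univ).card ≤ r :=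
      le_trans Finset.card_image_le (by simp)
    omega
  have hDYne : ∀ ys : Fin r → Y,
      ((Finset.univ \ Finset.image ys Finset.univ).powersetCard (l - r)).Nonempty := by
    intro ys
    rw [Finset.powersetCard_nonempty, Finset.card_sdiff_of_subset (Finset.subset_univ _), Finset.card_univ]
    have h1 : (Finset.image ys Finset.univ).card ≤ r :=
      le_trans Finset.card_image_le (by simp)
    omega
  have hwX : ((Fintype.piFinset (fun xs : Fin r → X => (Finset.univ \ Finset.image xs Finset.univ).powersetCard (k - r))).card : ℝ) ≠ 0 := by
    have : (Fintype.piFinset (fun xs : Fin r → X => (Finset.univ \ Finset.image xs Finset.univ).powersetCard (k - r))).Nonempty := by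
      rw [Fintype.piFinset_nonempty]
      exact hDXne
    exact Nat.cast_ne_zero.mpr (Finset.card_ne_zero_of_mem this.choose_spec)
  have hwY : ((Fintype.piFinset (fun ys : Fin r → Y => (Finset.univ \ Finset.image ys Finset.univ).powersetCard (l - r))).card : ℝ) ≠ 0 := by
    have : (Fintype.piFinset (fun ys : Fin r → Y => (Finset.univ \ Finset.image ys Finset.univ).powersetCard (l - r))).Nonempty := by
      rw [Fintype.piFinset_nonempty]
      exact hDYne
    exact Nat.cast_ne_zero.mpr (Finset.card_ne_zero_of_mem this.choose_spec)
  -- pointwise bound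
  have hpt : ∀ p ∈ ErSet E r, ∀ (S : Finset X) (T : Finset Y),
      (if (S.card = k ∧ T.card = l ∧ (∀ i, p.1 i ∈ S) ∧ (∀ i, p.2 i ∈ T)) then (((Fintype.card X - r).choose (k - r) : ℝ) * ((Fintype.card Y - r).choose (l - r) : ℝ))⁻¹ else 0) * (if bPred E P S T (a S) (b T) then (1:ℝ) else 0) ≤ (if S.card = k ∧ Finset.image p.1 Finset.univ ⊆ S then (if T.card = l ∧ Finset.image p.2 Finset.univ ⊆ T then (((Fintype.card X - r).choose (k - r) : ℝ) * ((Fintype.card Y - r).choose (l - r) : ℝ))⁻¹ * (if (∀ i, P (p.1 i) (p.2 i) (a S (p.1 i)) (b T (p.2 i))) then (1:ℝ) else 0) else 0) else 0) := by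
    intro p hp S T
    by_cases h1 : (S.card = k ∧ T.card = l ∧ (∀ i, p.1 i ∈ S) ∧ (∀ i, p.2 i ∈ T))
    · have hS : Finset.image p.1 Finset.univ ⊆ S := Finset.image_subset_iff.mpr fun i _ => h1.2.2.1 i
      have hT : Finset.image p.2 Finset.univ ⊆ T := Finset.image_subset_iff.mpr fun i _ => h1.2.2.2 i
      rw [if_pos h1]
      rw [show (if S.card = k ∧ Finset.image p.1 Finset.univ ⊆ S then
          (if T.card = l ∧ Finset.image p.2 Finset.univ ⊆ T then
            (((Fintype.card X - r).choose (k - r) : ℝ) *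
              ((Fintype.card Y - r).choose (l - r) : ℝ))⁻¹ *
            (if (∀ i, P (p.1 i) (p.2 i) (a S (p.1 i)) (b T (p.2 i))) then (1:ℝ) else 0)
          else 0) else 0)
        = (((Fintype.card X - r).choose (k - r) : ℝ) *
              ((Fintype.card Y - r).choose (l - r) : ℝ))⁻¹ *
            (if (∀ i, P (p.1 i) (p.2 i) (a S (p.1 i)) (b T (p.2 i))) then (1:ℝ) else 0)
        from by rw [if_pos ⟨h1.1, hS⟩, if_pos ⟨h1.2.1, hT⟩]]
      refine mul_le_mul_of_nonneg_left ?_ hc0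
      by_cases h2 : bPred E P S T (a S) (b T)
      · rw [if_pos h2, if_pos fun i => h2 (p.1 i) (h1.2.2.1 i) (p.2 i) (h1.2.2.2 i)
          ((hErmem p hp).1 i)]
      · rw [if_neg h2]
        split_ifs <;> norm_num
    · rw [if_neg h1, zero_mul]
      split_ifs <;> first | positivity | norm_num
  -- per-p reparametrization and marginalization
  have hper : ∀ p ∈ ErSet E r,
      (∑ S : Finset X, ∑ T : Finset Y, (if S.card = k ∧ Finset.image p.1 Finset.univ ⊆ S then (if T.card = l ∧ Finset.image p.2 Finset.univ ⊆ T then (((Fintype.card X - r).choose (k - r) : ℝ) * ((Fintype.card Y - r).choose (l - r) : ℝ))⁻¹ * (if (∀ i, P (p.1 i) (p.2 i) (a S (p.1 i)) (b T (p.2 i))) then (1:ℝ) else 0) else 0) else 0))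
        = ((Fintype.piFinset (fun xs : Fin r → X => (Finset.univ \ Finset.image xs Finset.univ).powersetCard (k - r))).card : ℝ)⁻¹ * ((Fintype.piFinset (fun ys : Fin r → Y => (Finset.univ \ Finset.image ys Finset.univ).powersetCard (l - r))).card : ℝ)⁻¹ *
            ∑ gX ∈ Fintype.piFinset (fun xs : Fin r → X => (Finset.univ \ Finset.image xs Finset.univ).powersetCard (k - r)), ∑ gY ∈ Fintype.piFinset (fun ys : Fin r → Y => (Finset.univ \ Finset.image ys Finset.univ).powersetCard (l - r)), (if (∀ i, P (p.1 i) (p.2 i) (a (Finset.image p.1 Finset.univ ∪ gX p.1) (p.1 i)) (b (Finset.image p.2 Finset.univ ∪ gY p.2) (p.2 i))) then (1:ℝ) else 0) := by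
    intro p hp
    have hT : ∀ S : Finset X,
        (∑ T : Finset Y, if T.card = l ∧ Finset.image p.2 Finset.univ ⊆ T then (((Fintype.card X - r).choose (k - r) : ℝ) * ((Fintype.card Y - r).choose (l - r) : ℝ))⁻¹ * (if (∀ i, P (p.1 i) (p.2 i) (a S (p.1 i)) (b T (p.2 i))) then (1:ℝ) else 0) else 0)
          = ∑ B2 ∈ (Finset.univ \ Finset.image p.2 Finset.univ).powersetCard (l - r), (((Fintype.card X - r).choose (k - r) : ℝ) * ((Fintype.card Y - r).choose (l - r) : ℝ))⁻¹ * (if (∀ i, P (p.1 i) (p.2 i) (a S (p.1 i)) (b (Finset.image p.2 Finset.univ ∪ B2) (p.2 i))) then (1:ℝ) else 0) := by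
      intro S
      rw [aux_sum_ite_superset (Finset.image p.2 Finset.univ) l (by rw [hcardY p hp]; exact hrl)
        (fun T => (((Fintype.card X - r).choose (k - r) : ℝ) * ((Fintype.card Y - r).choose (l - r) : ℝ))⁻¹ * (if (∀ i, P (p.1 i) (p.2 i) (a S (p.1 i)) (b T (p.2 i))) then (1:ℝ) else 0)), hcardY p hp]
    calc ∑ S : Finset X, ∑ T : Finset Y, (if S.card = k ∧ Finset.image p.1 Finset.univ ⊆ S then (if T.card = l ∧ Finset.image p.2 Finset.univ ⊆ T then (((Fintype.card X - r).choose (k - r) : ℝ) * ((Fintype.card Y - r).choose (l - r) : ℝ))⁻¹ * (if (∀ i, P (p.1 i) (p.2 i) (a S (p.1 i)) (b T (p.2 i))) then (1:ℝ) else 0) else 0) else 0)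
        = ∑ S : Finset X, (if S.card = k ∧ Finset.image p.1 Finset.univ ⊆ S then
            ∑ B2 ∈ (Finset.univ \ Finset.image p.2 Finset.univ).powersetCard (l - r), (((Fintype.card X - r).choose (k - r) : ℝ) * ((Fintype.card Y - r).choose (l - r) : ℝ))⁻¹ * (if (∀ i, P (p.1 i) (p.2 i) (a S (p.1 i)) (b (Finset.image p.2 Finset.univ ∪ B2) (p.2 i))) then (1:ℝ) else 0) else 0) := by
          refine Finset.sum_congr rfl fun S _ => ?_
          by_cases hS : S.card = k ∧ Finset.image p.1 Finset.univ ⊆ S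
          · simp only [if_pos hS]
            exact hT S
          · simp only [if_neg hS, Finset.sum_const_zero]
      _ = ∑ B1 ∈ (Finset.univ \ Finset.image p.1 Finset.univ).powersetCard (k - r), ∑ B2 ∈ (Finset.univ \ Finset.image p.2 Finset.univ).powersetCard (l - r),
            (((Fintype.card X - r).choose (k - r) : ℝ) * ((Fintype.card Y - r).choose (l - r) : ℝ))⁻¹ * (if (∀ i, P (p.1 i) (p.2 i) (a (Finset.image p.1 Finset.univ ∪ B1) (p.1 i)) (b (Finset.image p.2 Finset.univ ∪ B2) (p.2 i))) then (1:ℝ) else 0) := by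
          rw [aux_sum_ite_superset (Finset.image p.1 Finset.univ) k (by rw [hcardX p hp]; exact hrk)
            (fun S => ∑ B2 ∈ (Finset.univ \ Finset.image p.2 Finset.univ).powersetCard (l - r), (((Fintype.card X - r).choose (k - r) : ℝ) * ((Fintype.card Y - r).choose (l - r) : ℝ))⁻¹ * (if (∀ i, P (p.1 i) (p.2 i) (a S (p.1 i)) (b (Finset.image p.2 Finset.univ ∪ B2) (p.2 i))) then (1:ℝ) else 0)), hcardX p hp]
      _ = ((Fintype.card X - r).choose (k - r) : ℝ)⁻¹ * ∑ B1 ∈ (Finset.univ \ Finset.image p.1 Finset.univ).powersetCard (k - r), (((Fintype.card Y - r).choose (l - r) : ℝ)⁻¹ * ∑ B2 ∈ (Finset.univ \ Finset.image p.2 Finset.univ).powersetCard (l - r),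
            (if (∀ i, P (p.1 i) (p.2 i) (a (Finset.image p.1 Finset.univ ∪ B1) (p.1 i)) (b (Finset.image p.2 Finset.univ ∪ B2) (p.2 i))) then (1:ℝ) else 0)) := by
          rw [Finset.mul_sum]
          refine Finset.sum_congr rfl fun B1 _ => ?_
          rw [Finset.mul_sum, Finset.mul_sum]
          refine Finset.sum_congr rfl fun B2 _ => ?_
          rw [mul_inv]
          ring
      _ = ((Fintype.card X - r).choose (k - r) : ℝ)⁻¹ * ∑ B1 ∈ (Finset.univ \ Finset.image p.1 Finset.univ).powersetCard (k - r), (((Fintype.piFinset (fun ys : Fin r → Y => (Finset.univ \ Finset.image ys Finset.univ).powersetCard (l - r))).card : ℝ)⁻¹ * ∑ gY ∈ Fintype.piFinset (fun ys : Fin r → Y => (Finset.univ \ Finset.image ys Finset.univ).powersetCard (l - r)),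
            (if (∀ i, P (p.1 i) (p.2 i) (a (Finset.image p.1 Finset.univ ∪ B1) (p.1 i)) (b (Finset.image p.2 Finset.univ ∪ gY p.2) (p.2 i))) then (1:ℝ) else 0)) := by
          refine congrArg _ (Finset.sum_congr rfl fun B1 _ => ?_)
          have hm := aux_marginal_inv
            (fun ys : Fin r → Y => (Finset.univ \ Finset.image ys Finset.univ).powersetCard (l - r))
            hDYne p.2 (fun B2 => (if (∀ i, P (p.1 i) (p.2 i) (a (Finset.image p.1 Finset.univ ∪ B1) (p.1 i)) (b (Finset.image p.2 Finset.univ ∪ B2) (p.2 i))) then (1:ℝ) else 0))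
          rw [hDYcard p hp] at hm
          exact hm
      _ = ((Fintype.piFinset (fun xs : Fin r → X => (Finset.univ \ Finset.image xs Finset.univ).powersetCard (k - r))).card : ℝ)⁻¹ * ∑ gX ∈ Fintype.piFinset (fun xs : Fin r → X => (Finset.univ \ Finset.image xs Finset.univ).powersetCard (k - r)), (((Fintype.piFinset (fun ys : Fin r → Y => (Finset.univ \ Finset.image ys Finset.univ).powersetCard (l - r))).card : ℝ)⁻¹ * ∑ gY ∈ Fintype.piFinset (fun ys : Fin r → Y => (Finset.univ \ Finset.image ys Finset.univ).powersetCard (l - r)), (if (∀ i, P (p.1 i) (p.2 i) (a (Finset.image p.1 Finset.univ ∪ gX p.1) (p.1 i)) (b (Finset.image p.2 Finset.univ ∪ gY p.2) (p.2 i))) then (1:ℝ) else 0)) := by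
          have hm := aux_marginal_inv
            (fun xs : Fin r → X => (Finset.univ \ Finset.image xs Finset.univ).powersetCard (k - r))
            hDXne p.1 (fun B1 => ((Fintype.piFinset (fun ys : Fin r → Y => (Finset.univ \ Finset.image ys Finset.univ).powersetCard (l - r))).card : ℝ)⁻¹ * ∑ gY ∈ Fintype.piFinset (fun ys : Fin r → Y => (Finset.univ \ Finset.image ys Finset.univ).powersetCard (l - r)),
              (if (∀ i, P (p.1 i) (p.2 i) (a (Finset.image p.1 Finset.univ ∪ B1) (p.1 i)) (b (Finset.image p.2 Finset.univ ∪ gY p.2) (p.2 i))) then (1:ℝ) else 0))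
          rw [hDXcard p hp] at hm
          exact hm
      _ = _ := by
          rw [← Finset.mul_sum, ← mul_assoc]
  -- strategy bound
  have hstrat : ∀ gX ∈ Fintype.piFinset (fun xs : Fin r → X => (Finset.univ \ Finset.image xs Finset.univ).powersetCard (k - r)), ∀ gY ∈ Fintype.piFinset (fun ys : Fin r → Y => (Finset.univ \ Finset.image ys Finset.univ).powersetCard (l - r)),
      ((ErSet E r).card : ℝ)⁻¹ * (∑ p ∈ ErSet E r, (if (∀ i, P (p.1 i) (p.2 i) (a (Finset.image p.1 Finset.univ ∪ gX p.1) (p.1 i)) (b (Finset.image p.2 Finset.univ ∪ gY p.2) (p.2 i))) then (1:ℝ) else 0)) ≤ parSetVal E P r := by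
    intro gX _ gY _
    rw [parSetVal]
    refine le_trans (le_of_eq ?_) (aux_le_gameVal _ _
      ((fun xs i => a (Finset.image xs Finset.univ ∪ gX xs) (xs i)),
       (fun ys i => b (Finset.image ys Finset.univ ∪ gY ys) (ys i))))
    calc ((ErSet E r).card : ℝ)⁻¹ * (∑ p ∈ ErSet E r, (if (∀ i, P (p.1 i) (p.2 i) (a (Finset.image p.1 Finset.univ ∪ gX p.1) (p.1 i)) (b (Finset.image p.2 Finset.univ ∪ gY p.2) (p.2 i))) then (1:ℝ) else 0))
        = ∑ p ∈ ErSet E r, ((ErSet E r).card : ℝ)⁻¹ * (if (∀ i, P (p.1 i) (p.2 i) (a (Finset.image p.1 Finset.univ ∪ gX p.1) (p.1 i)) (b (Finset.image p.2 Finset.univ ∪ gY p.2) (p.2 i))) then (1:ℝ) else 0) := Finset.mul_sum _ _ _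
      _ = ∑ p ∈ Finset.univ ∩ ErSet E r, ((ErSet E r).card : ℝ)⁻¹ * (if (∀ i, P (p.1 i) (p.2 i) (a (Finset.image p.1 Finset.univ ∪ gX p.1) (p.1 i)) (b (Finset.image p.2 Finset.univ ∪ gY p.2) (p.2 i))) then (1:ℝ) else 0) := by rw [Finset.univ_inter]
      _ = ∑ p : (Fin r → X) × (Fin r → Y), (if p ∈ ErSet E r then ((ErSet E r).card : ℝ)⁻¹ * (if (∀ i, P (p.1 i) (p.2 i) (a (Finset.image p.1 Finset.univ ∪ gX p.1) (p.1 i)) (b (Finset.image p.2 Finset.univ ∪ gY p.2) (p.2 i))) then (1:ℝ) else 0) else 0) :=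
          (Finset.sum_ite_mem _ _ _).symm
      _ = ∑ p : (Fin r → X) × (Fin r → Y),
            (if p ∈ ErSet E r then ((ErSet E r).card : ℝ)⁻¹ else 0) * (if (∀ i, P (p.1 i) (p.2 i) (a (Finset.image p.1 Finset.univ ∪ gX p.1) (p.1 i)) (b (Finset.image p.2 Finset.univ ∪ gY p.2) (p.2 i))) then (1:ℝ) else 0) := by
          refine Finset.sum_congr rfl fun p _ => ?_
          split_ifs <;> simp
      _ = _ := by
          dsimp only
          rw [Fintype.sum_prod_type]
          refine Finset.sum_congr rfl fun x _ => Finset.sum_congr rfl fun y _ => ?_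
          norm_num
  -- main computation
  have hA : (∑ S : Finset X, ∑ T : Finset Y, Qem E r k l S T * (if bPred E P S T (a S) (b T) then (1:ℝ) else 0))
      = ((ErSet E r).card : ℝ)⁻¹ * ∑ p ∈ ErSet E r, ∑ S : Finset X, ∑ T : Finset Y,
          (if (S.card = k ∧ T.card = l ∧ (∀ i, p.1 i ∈ S) ∧ (∀ i, p.2 i ∈ T)) then (((Fintype.card X - r).choose (k - r) : ℝ) * ((Fintype.card Y - r).choose (l - r) : ℝ))⁻¹ else 0) * (if bPred E P S T (a S) (b T) then (1:ℝ) else 0) := by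
    simp only [Qem]
    calc ∑ S : Finset X, ∑ T : Finset Y,
          (((ErSet E r).card : ℝ)⁻¹ * ∑ p ∈ ErSet E r, (if (S.card = k ∧ T.card = l ∧ (∀ i, p.1 i ∈ S) ∧ (∀ i, p.2 i ∈ T)) then (((Fintype.card X - r).choose (k - r) : ℝ) * ((Fintype.card Y - r).choose (l - r) : ℝ))⁻¹ else 0)) * (if bPred E P S T (a S) (b T) then (1:ℝ) else 0)
        = ∑ S : Finset X, ∑ T : Finset Y, ∑ p ∈ ErSet E r,
            ((ErSet E r).card : ℝ)⁻¹ * ((if (S.card = k ∧ T.card = l ∧ (∀ i, p.1 i ∈ S) ∧ (∀ i, p.2 i ∈ T)) then (((Fintype.card X - r).choose (k - r) : ℝ) * ((Fintype.card Y - r).choose (l - r) : ℝ))⁻¹ else 0) * (if bPred E P S T (a S) (b T) then (1:ℝ) else 0)) := by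
          refine Finset.sum_congr rfl fun S _ => Finset.sum_congr rfl fun T _ => ?_
          rw [mul_assoc, Finset.sum_mul, Finset.mul_sum]
      _ = ∑ S : Finset X, ∑ p ∈ ErSet E r, ∑ T : Finset Y,
            ((ErSet E r).card : ℝ)⁻¹ * ((if (S.card = k ∧ T.card = l ∧ (∀ i, p.1 i ∈ S) ∧ (∀ i, p.2 i ∈ T)) then (((Fintype.card X - r).choose (k - r) : ℝ) * ((Fintype.card Y - r).choose (l - r) : ℝ))⁻¹ else 0) * (if bPred E P S T (a S) (b T) then (1:ℝ) else 0)) :=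
          Finset.sum_congr rfl fun S _ => Finset.sum_comm
      _ = ∑ p ∈ ErSet E r, ∑ S : Finset X, ∑ T : Finset Y,
            ((ErSet E r).card : ℝ)⁻¹ * ((if (S.card = k ∧ T.card = l ∧ (∀ i, p.1 i ∈ S) ∧ (∀ i, p.2 i ∈ T)) then (((Fintype.card X - r).choose (k - r) : ℝ) * ((Fintype.card Y - r).choose (l - r) : ℝ))⁻¹ else 0) * (if bPred E P S T (a S) (b T) then (1:ℝ) else 0)) :=
          Finset.sum_comm
      _ = _ := by
          simp only [← Finset.mul_sum]
  rw [hA]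
  have hswap : ∑ p ∈ ErSet E r, ∑ gX ∈ Fintype.piFinset (fun xs : Fin r → X => (Finset.univ \ Finset.image xs Finset.univ).powersetCard (k - r)), ∑ gY ∈ Fintype.piFinset (fun ys : Fin r → Y => (Finset.univ \ Finset.image ys Finset.univ).powersetCard (l - r)), (if (∀ i, P (p.1 i) (p.2 i) (a (Finset.image p.1 Finset.univ ∪ gX p.1) (p.1 i)) (b (Finset.image p.2 Finset.univ ∪ gY p.2) (p.2 i))) then (1:ℝ) else 0)
      = ∑ gX ∈ Fintype.piFinset (fun xs : Fin r → X => (Finset.univ \ Finset.image xs Finset.univ).powersetCard (k - r)), ∑ gY ∈ Fintype.piFinset (fun ys : Fin r → Y => (Finset.univ \ Finset.image ys Finset.univ).powersetCard (l - r)), ∑ p ∈ ErSet E r, (if (∀ i, P (p.1 i) (p.2 i) (a (Finset.image p.1 Finset.univ ∪ gX p.1) (p.1 i)) (b (Finset.image p.2 Finset.univ ∪ gY p.2) (p.2 i))) then (1:ℝ) else 0) := by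
    rw [Finset.sum_comm]
    exact Finset.sum_congr rfl fun gX _ => Finset.sum_comm
  calc ((ErSet E r).card : ℝ)⁻¹ * ∑ p ∈ ErSet E r, ∑ S : Finset X, ∑ T : Finset Y,
        (if (S.card = k ∧ T.card = l ∧ (∀ i, p.1 i ∈ S) ∧ (∀ i, p.2 i ∈ T)) then (((Fintype.card X - r).choose (k - r) : ℝ) * ((Fintype.card Y - r).choose (l - r) : ℝ))⁻¹ else 0) * (if bPred E P S T (a S) (b T) then (1:ℝ) else 0)
      ≤ ((ErSet E r).card : ℝ)⁻¹ * ∑ p ∈ ErSet E r, ∑ S : Finset X, ∑ T : Finset Y, (if S.card = k ∧ Finset.image p.1 Finset.univ ⊆ S then (if T.card = l ∧ Finset.image p.2 Finset.univ ⊆ T then (((Fintype.card X - r).choose (k - r) : ℝ) * ((Fintype.card Y - r).choose (l - r) : ℝ))⁻¹ * (if (∀ i, P (p.1 i) (p.2 i) (a S (p.1 i)) (b T (p.2 i))) then (1:ℝ) else 0) else 0) else 0) := by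
        refine mul_le_mul_of_nonneg_left ?_ (inv_nonneg.mpr (Nat.cast_nonneg _))
        exact Finset.sum_le_sum fun p hp => Finset.sum_le_sum fun S _ =>
          Finset.sum_le_sum fun T _ => hpt p hp S T
    _ = ((ErSet E r).card : ℝ)⁻¹ * ∑ p ∈ ErSet E r, (((Fintype.piFinset (fun xs : Fin r → X => (Finset.univ \ Finset.image xs Finset.univ).powersetCard (k - r))).card : ℝ)⁻¹ * ((Fintype.piFinset (fun ys : Fin r → Y => (Finset.univ \ Finset.image ys Finset.univ).powersetCard (l - r))).card : ℝ)⁻¹ *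
          ∑ gX ∈ Fintype.piFinset (fun xs : Fin r → X => (Finset.univ \ Finset.image xs Finset.univ).powersetCard (k - r)), ∑ gY ∈ Fintype.piFinset (fun ys : Fin r → Y => (Finset.univ \ Finset.image ys Finset.univ).powersetCard (l - r)), (if (∀ i, P (p.1 i) (p.2 i) (a (Finset.image p.1 Finset.univ ∪ gX p.1) (p.1 i)) (b (Finset.image p.2 Finset.univ ∪ gY p.2) (p.2 i))) then (1:ℝ) else 0)) := by
        rw [Finset.sum_congr rfl hper]
    _ = ((Fintype.piFinset (fun xs : Fin r → X => (Finset.univ \ Finset.image xs Finset.univ).powersetCard (k - r))).card : ℝ)⁻¹ * ((Fintype.piFinset (fun ys : Fin r → Y => (Finset.univ \ Finset.image ys Finset.univ).powersetCard (l - r))).card : ℝ)⁻¹ * ∑ gX ∈ Fintype.piFinset (fun xs : Fin r → X => (Finset.univ \ Finset.image xs Finset.univ).powersetCard (k - r)), ∑ gY ∈ Fintype.piFinset (fun ys : Fin r → Y => (Finset.univ \ Finset.image ys Finset.univ).powersetCard (l - r)),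
          (((ErSet E r).card : ℝ)⁻¹ * ∑ p ∈ ErSet E r, (if (∀ i, P (p.1 i) (p.2 i) (a (Finset.image p.1 Finset.univ ∪ gX p.1) (p.1 i)) (b (Finset.image p.2 Finset.univ ∪ gY p.2) (p.2 i))) then (1:ℝ) else 0)) := by
        simp only [← Finset.mul_sum]
        rw [hswap]
        ring
    _ ≤ ((Fintype.piFinset (fun xs : Fin r → X => (Finset.univ \ Finset.image xs Finset.univ).powersetCard (k - r))).card : ℝ)⁻¹ * ((Fintype.piFinset (fun ys : Fin r → Y => (Finset.univ \ Finset.image ys Finset.univ).powersetCard (l - r))).card : ℝ)⁻¹ * ∑ gX ∈ Fintype.piFinset (fun xs : Fin r → X => (Finset.univ \ Finset.image xs Finset.univ).powersetCard (k - r)), ∑ gY ∈ Fintype.piFinset (fun ys : Fin r → Y => (Finset.univ \ Finset.image ys Finset.univ).powersetCard (l - r)), parSetVal E P r := by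
        refine mul_le_mul_of_nonneg_left ?_
          (mul_nonneg (inv_nonneg.mpr (Nat.cast_nonneg _)) (inv_nonneg.mpr (Nat.cast_nonneg _)))
        exact Finset.sum_le_sum fun gX hgX => Finset.sum_le_sum fun gY hgY => hstrat gX hgX gY hgY
    _ = parSetVal E P r := by
        simp only [Finset.sum_const, nsmul_eq_mul]
        rw [show ((Fintype.piFinset (fun xs : Fin r → X => (Finset.univ \ Finset.image xs Finset.univ).powersetCard (k - r))).card : ℝ)⁻¹ * ((Fintype.piFinset (fun ys : Fin r → Y => (Finset.univ \ Finset.image ys Finset.univ).powersetCard (l - r))).card : ℝ)⁻¹ * (((Fintype.piFinset (fun xs : Fin r → X => (Finset.univ \ Finset.image xs Finset.univ).powersetCard (k - r))).card : ℝ) * (((Fintype.piFinset (fun ys : Fin r → Y => (Finset.univ \ Finset.image ys Finset.univ).powersetCard (l - r))).card : ℝ) * parSetVal E P r))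
            = (((Fintype.piFinset (fun xs : Fin r → X => (Finset.univ \ Finset.image xs Finset.univ).powersetCard (k - r))).card : ℝ)⁻¹ * ((Fintype.piFinset (fun xs : Fin r → X => (Finset.univ \ Finset.image xs Finset.univ).powersetCard (k - r))).card : ℝ)) * ((((Fintype.piFinset (fun ys : Fin r → Y => (Finset.univ \ Finset.image ys Finset.univ).powersetCard (l - r))).card : ℝ)⁻¹ * ((Fintype.piFinset (fun ys : Fin r → Y => (Finset.univ \ Finset.image ys Finset.univ).powersetCard (l - r))).card : ℝ)) * parSetVal E P r) from by ring,
          inv_mul_cancel₀ hwX, inv_mul_cancel₀ hwY, one_mul, one_mul]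
end
end

section
/- Let {X_S} be a k-level Sherali–Adams solution of value 1 − δ for a Max k-CSP instance (V, W, {P_S}) such that the solution is κ-independent, where it is assumed that whenever a tuple S contains a repeated variable, P_S is zero on any assignment that assigns the same variable to two different values. Then E_{S=(x_{i_1},…,x_{i_k})∼W}[ E_{φ_S ∼ X_{x_{i_1}} × ⋯ × X_{x_{i_k}}}[P_S(φ_S)] ] ≥ (δ^δ·e^{−κ})^{1/(1−δ)}·(1 − δ), where X_{x} denotes the marginal distribution of the solution on the single variable x, by convention 0^0 = 1, and the right-hand side is interpreted as 0 when δ = 1; consequently independent rounding (sampling each variable independently from its marginal) gives an assignment of value at least (δ^δ·e^{−κ})^{1/(1−δ)}·(1 − δ). -/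
open Finset

attribute [local instance] Classical.propDecidable

noncomputable section

/-- Kullback–Leibler divergence between two distributions on a finite set, with the usual
convention that terms with `X θ = 0` contribute `0`. -/
def klDiv {Θ : Type*} [Fintype Θ] (X Y : Θ → ℝ) : ℝ :=
  ∑ θ : Θ, if X θ ≠ 0 then X θ * Real.log (X θ / Y θ) else 0

lemma log_sum_ineq {ι : Type*} [Fintype ι] (a b : ι → ℝ) (ha : ∀ i, 0 ≤ a i)
    (hb : ∀ i, 0 ≤ b i) (habs : ∀ i, b i = 0 → a i = 0) :
    (∑ i, a i) * Real.log ((∑ i, a i) / (∑ i, b i)) ≤ ∑ i, a i * Real.log (a i / b i) := by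
  rcases eq_or_lt_of_le (Finset.sum_nonneg (fun i _ => hb i)) with hB | hB
  · have hbz : ∀ i, b i = 0 := by
      intro i
      have := (Finset.sum_eq_zero_iff_of_nonneg (fun i _ => hb i)).mp hB.symm
      exact this i (mem_univ i)
    have haz : ∀ i, a i = 0 := fun i => habs i (hbz i)
    simp [haz]
  rcases eq_or_lt_of_le (Finset.sum_nonneg (fun i _ => ha i)) with hA | hA
  · have haz : ∀ i, a i = 0 := by
      intro i
      have := (Finset.sum_eq_zero_iff_of_nonneg (fun i _ => ha i)).mp hA.symm
      exact this i (mem_univ i)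
    simp [haz]
  set A := ∑ i, a i
  set B := ∑ i, b i
  have key := Real.convexOn_mul_log.map_centerMass_le (t := Finset.univ)
    (w := b) (p := fun i => a i / b i) (fun i _ => hb i) hB
    (fun i _ => div_nonneg (ha i) (hb i))
  have hcm : Finset.univ.centerMass b (fun i => a i / b i) = A / B := by
    rw [Finset.centerMass]
    have : ∑ i, b i • (a i / b i) = A := by
      apply Finset.sum_congr rfl
      intro i _
      rcases eq_or_ne (b i) 0 with h | h
      · simp [h, habs i h]
      · rw [smul_eq_mul]
        field_simp
    rw [this]
    rw [smul_eq_mul, inv_mul_eq_div]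
  have hcm2 : Finset.univ.centerMass b ((fun x => x * Real.log x) ∘ fun i => a i / b i)
      = B⁻¹ * ∑ i, a i * Real.log (a i / b i) := by
    rw [Finset.centerMass, smul_eq_mul]
    congr 1
    apply Finset.sum_congr rfl
    intro i _
    rcases eq_or_ne (b i) 0 with h | h
    · simp [h, habs i h]
    · simp only [Function.comp, smul_eq_mul]
      field_simp
  rw [hcm, hcm2] at key
  have : A / B * Real.log (A / B) * B ≤ B⁻¹ * (∑ i, a i * Real.log (a i / b i)) * B :=
    mul_le_mul_of_nonneg_right key (le_of_lt hB)
  calc A * Real.log (A / B) = A / B * Real.log (A / B) * B := by field_simp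
    _ ≤ B⁻¹ * (∑ i, a i * Real.log (a i / b i)) * B := this
    _ = ∑ i, a i * Real.log (a i / b i) := by
        rw [mul_comm B⁻¹, mul_assoc, inv_mul_cancel₀ (ne_of_gt hB), mul_one]

lemma binary_dpi {ι : Type*} [Fintype ι] (X Y f : ι → ℝ)
    (hX0 : ∀ i, 0 ≤ X i) (hY0 : ∀ i, 0 ≤ Y i)
    (hX1 : ∑ i, X i = 1) (hY1 : ∑ i, Y i = 1)
    (habs : ∀ i, Y i = 0 → X i = 0) (hf0 : ∀ i, 0 ≤ f i) (hf1 : ∀ i, f i ≤ 1) :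
    (∑ i, X i * f i) * Real.log ((∑ i, X i * f i) / (∑ i, Y i * f i)) +
      (1 - ∑ i, X i * f i) *
        Real.log ((1 - ∑ i, X i * f i) / (1 - ∑ i, Y i * f i)) ≤ klDiv X Y := by
  have hsplit : klDiv X Y =
      (∑ i, (X i * f i) * Real.log ((X i * f i) / (Y i * f i))) +
      (∑ i, (X i * (1 - f i)) * Real.log ((X i * (1 - f i)) / (Y i * (1 - f i)))) := by
    rw [klDiv, ← Finset.sum_add_distrib]
    apply Finset.sum_congr rfl
    intro i _
    rcases eq_or_ne (X i) 0 with hx | hx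
    · simp [hx]
    rcases eq_or_ne (f i) 0 with hf | hf
    · simp only [hf, mul_zero, zero_mul, sub_zero, mul_one, zero_add, if_pos hx]
    rcases eq_or_ne (f i) 1 with hf' | hf'
    · simp only [hf', mul_one, sub_self, mul_zero, zero_mul, add_zero, if_pos hx]
    have h1 : (X i * f i) / (Y i * f i) = X i / Y i := mul_div_mul_right _ _ hf
    have h2 : (X i * (1 - f i)) / (Y i * (1 - f i)) = X i / Y i :=
      mul_div_mul_right _ _ (sub_ne_zero.mpr (Ne.symm hf'))
    rw [h1, h2, if_pos hx]
    ring
  rw [hsplit]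
  have h1 := log_sum_ineq (fun i => X i * f i) (fun i => Y i * f i)
    (fun i => mul_nonneg (hX0 i) (hf0 i)) (fun i => mul_nonneg (hY0 i) (hf0 i))
    (by
      intro i h
      rcases mul_eq_zero.mp h with h | h
      · exact mul_eq_zero_of_left (habs i h) _
      · exact mul_eq_zero_of_right _ h)
  have h2 := log_sum_ineq (fun i => X i * (1 - f i)) (fun i => Y i * (1 - f i))
    (fun i => mul_nonneg (hX0 i) (by linarith [hf1 i]))
    (fun i => mul_nonneg (hY0 i) (by linarith [hf1 i]))
    (by
      intro i h
      rcases mul_eq_zero.mp h with h | h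
      · exact mul_eq_zero_of_left (habs i h) _
      · exact mul_eq_zero_of_right _ h)
  have e1 : ∑ i, X i * (1 - f i) = 1 - ∑ i, X i * f i := by
    simp only [mul_sub, mul_one]
    rw [Finset.sum_sub_distrib, hX1]
  have e2 : ∑ i, Y i * (1 - f i) = 1 - ∑ i, Y i * f i := by
    simp only [mul_sub, mul_one]
    rw [Finset.sum_sub_distrib, hY1]
  rw [e1, e2] at h2
  exact add_le_add h1 h2


lemma numeric_bound (δ κ b : ℝ) (hδ0 : 0 ≤ δ) (hδ1 : δ ≤ 1) (hb0 : 0 ≤ b) (hb1 : b ≤ 1)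
    (hbz : b = 0 → 1 - δ = 0)
    (h : (1 - δ) * Real.log ((1 - δ) / b) + δ * Real.log (δ / (1 - b)) ≤ κ) :
    (δ ^ δ * Real.exp (-κ)) ^ ((1 : ℝ) / (1 - δ)) * (1 - δ) ≤ b := by
  rcases eq_or_lt_of_le hδ1 with h1 | h1
  · rw [← h1]
    simp [hb0]
  have ha : 0 < 1 - δ := by linarith
  have hbpos : 0 < b := by
    rcases eq_or_lt_of_le hb0 with h' | h'
    · exact absurd (hbz h'.symm) (ne_of_gt ha)
    · exact h'
  have hterm2 : δ * Real.log δ ≤ δ * Real.log (δ / (1 - b)) := by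
    rcases eq_or_lt_of_le hδ0 with h0 | h0
    · simp [← h0]
    rcases eq_or_lt_of_le hb1 with hb1' | hb1'
    · rw [hb1'.symm]
      simp only [sub_self, div_zero, Real.log_zero, mul_zero]
      exact mul_nonpos_of_nonneg_of_nonpos (le_of_lt h0) (Real.log_nonpos hδ0 hδ1)
    · apply mul_le_mul_of_nonneg_left _ hδ0
      apply Real.log_le_log h0
      rw [le_div_iff₀ (by linarith)]
      nlinarith
  have key : (1 - δ) * Real.log ((1 - δ) / b) ≤ κ - δ * Real.log δ := by linarith
  have hlog : Real.log ((1 - δ) / b) ≤ (κ - δ * Real.log δ) / (1 - δ) := by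
    rw [le_div_iff₀ ha]
    linarith [key]
  have hratio : (1 - δ) / b ≤ Real.exp ((κ - δ * Real.log δ) / (1 - δ)) :=
    (Real.log_le_iff_le_exp (div_pos ha hbpos)).mp hlog
  have hfinal : (1 - δ) * Real.exp (-((κ - δ * Real.log δ) / (1 - δ))) ≤ b := by
    rw [Real.exp_neg]
    rw [div_le_iff₀ hbpos] at hratio
    rw [mul_inv_le_iff₀ (Real.exp_pos _)]
    linarith [hratio]
  have hrw : (δ ^ δ * Real.exp (-κ)) ^ ((1 : ℝ) / (1 - δ)) * (1 - δ)
      = (1 - δ) * Real.exp (-((κ - δ * Real.log δ) / (1 - δ))) := by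
    have hpow : δ ^ δ = Real.exp (δ * Real.log δ) := by
      rcases eq_or_lt_of_le hδ0 with h0 | h0
      · rw [← h0]
        simp
      · rw [Real.rpow_def_of_pos h0]
        ring_nf
    rw [hpow, ← Real.exp_add, ← Real.exp_one_rpow (δ * Real.log δ + -κ)]
    rw [← Real.rpow_mul (le_of_lt (Real.exp_pos 1)), Real.exp_one_rpow, mul_comm]
    congr 1
    field_simp
    ring
  rw [hrw]
  exact hfinal

lemma core_bound {ι : Type*} [Fintype ι] (X Y f : ι → ℝ)
    (hX0 : ∀ i, 0 ≤ X i) (hY0 : ∀ i, 0 ≤ Y i)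
    (hX1 : ∑ i, X i = 1) (hY1 : ∑ i, Y i = 1)
    (habs : ∀ i, Y i = 0 → X i = 0) (hf0 : ∀ i, 0 ≤ f i) (hf1 : ∀ i, f i ≤ 1)
    (δ κ : ℝ) (hval : ∑ i, X i * f i = 1 - δ) (hκ : klDiv X Y ≤ κ) :
    (δ ^ δ * Real.exp (-κ)) ^ ((1 : ℝ) / (1 - δ)) * (1 - δ) ≤ ∑ i, Y i * f i := by
  set b := ∑ i, Y i * f i with hbdef
  have hb0 : 0 ≤ b := Finset.sum_nonneg fun i _ => mul_nonneg (hY0 i) (hf0 i)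
  have hb1 : b ≤ 1 := by
    rw [hbdef, ← hY1]
    exact Finset.sum_le_sum fun i _ => by
      calc Y i * f i ≤ Y i * 1 := mul_le_mul_of_nonneg_left (hf1 i) (hY0 i)
        _ = Y i := mul_one _
  have hδ0 : 0 ≤ δ := by
    have : ∑ i, X i * f i ≤ 1 := by
      rw [← hX1]
      exact Finset.sum_le_sum fun i _ => by
        calc X i * f i ≤ X i * 1 := mul_le_mul_of_nonneg_left (hf1 i) (hX0 i)
          _ = X i := mul_one _
    linarith [hval]
  have hδ1 : δ ≤ 1 := by
    have : 0 ≤ ∑ i, X i * f i := Finset.sum_nonneg fun i _ => mul_nonneg (hX0 i) (hf0 i)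
    linarith [hval]
  have hbz : b = 0 → 1 - δ = 0 := by
    intro hb
    rw [← hval]
    apply Finset.sum_eq_zero
    intro i _
    have hYf : Y i * f i = 0 :=
      (Finset.sum_eq_zero_iff_of_nonneg
        (fun j (_ : j ∈ Finset.univ) => mul_nonneg (hY0 j) (hf0 j))).mp hb i (mem_univ i)
    rcases mul_eq_zero.mp hYf with h | h
    · exact mul_eq_zero_of_left (habs i h) _
    · exact mul_eq_zero_of_right _ h
  apply numeric_bound δ κ b hδ0 hδ1 hb0 hb1 hbz
  have := binary_dpi X Y f hX0 hY0 hX1 hY1 habs hf0 hf1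
  rw [hval] at this
  calc (1 - δ) * Real.log ((1 - δ) / b) + δ * Real.log (δ / (1 - b))
      = (1 - δ) * Real.log ((1 - δ) / b) + (1 - (1-δ)) * Real.log ((1 - (1-δ)) / (1 - b)) := by
        ring_nf
    _ ≤ klDiv X Y := this
    _ ≤ κ := hκ

/-- Fubini-type identity for the joint local distribution. -/
lemma joint_sum {V A : Type*} [Fintype V] [Fintype A] {k : ℕ} (μA : (V → A) → ℝ)
    (S : Fin k → V) (g : (Fin k → A) → ℝ) :
    ∑ v : Fin k → A, (∑ φ : V → A, if ∀ i, φ (S i) = v i then μA φ else 0) * g v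
      = ∑ φ : V → A, μA φ * g (fun i => φ (S i)) := by
  simp only [Finset.sum_mul]
  rw [Finset.sum_comm]
  apply Finset.sum_congr rfl
  intro φ _
  simp only [ite_mul, zero_mul]
  have hcond : ∀ v : Fin k → A, (∀ i, φ (S i) = v i) = ((fun i => φ (S i)) = v) := by
    intro v
    rw [funext_iff]
  simp only [hcond]
  rw [Finset.sum_ite_eq]
  simp


/-- The product-space assembly of the distributional inequality. -/
lemma sa_core {Γ Ω : Type*} [Fintype Γ] [Fintype Ω]
    (W : Γ → ℝ) (hW0 : ∀ S, 0 ≤ W S) (hW1 : ∑ S, W S = 1)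
    (Y Q P : Γ → Ω → ℝ)
    (hY0 : ∀ S v, 0 ≤ Y S v) (hQ0 : ∀ S v, 0 ≤ Q S v)
    (hY1 : ∀ S, ∑ v, Y S v = 1) (hQ1 : ∀ S, ∑ v, Q S v = 1)
    (habs : ∀ S v, Q S v = 0 → Y S v = 0)
    (hP0 : ∀ S v, 0 ≤ P S v) (hP1 : ∀ S v, P S v ≤ 1)
    (δ κ : ℝ)
    (hval : ∑ S, W S * ∑ v, Y S v * P S v = 1 - δ)
    (hκ : ∑ S, W S * klDiv (Y S) (Q S) ≤ κ) :
    (δ ^ δ * Real.exp (-κ)) ^ ((1 : ℝ) / (1 - δ)) * (1 - δ) ≤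
      ∑ S, W S * ∑ v, Q S v * P S v := by
  have key := core_bound (ι := Γ × Ω)
    (fun p => W p.1 * Y p.1 p.2) (fun p => W p.1 * Q p.1 p.2) (fun p => P p.1 p.2)
    (fun p => mul_nonneg (hW0 _) (hY0 _ _)) (fun p => mul_nonneg (hW0 _) (hQ0 _ _))
    (by
      rw [Fintype.sum_prod_type, ← hW1]
      exact Finset.sum_congr rfl fun S _ => by dsimp only; rw [← Finset.mul_sum, hY1, mul_one])
    (by
      rw [Fintype.sum_prod_type, ← hW1]
      exact Finset.sum_congr rfl fun S _ => by dsimp only; rw [← Finset.mul_sum, hQ1, mul_one])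
    (by
      intro p h
      rcases mul_eq_zero.mp h with h | h
      · exact mul_eq_zero_of_left h _
      · exact mul_eq_zero_of_right _ (habs _ _ h))
    (fun p => hP0 _ _) (fun p => hP1 _ _) δ κ
    (by
      rw [Fintype.sum_prod_type, ← hval]
      exact Finset.sum_congr rfl fun S _ => by
        dsimp only
        rw [Finset.mul_sum]
        exact Finset.sum_congr rfl fun v _ => by ring)
    (by
      refine le_trans (le_of_eq ?_) hκ
      rw [klDiv, Fintype.sum_prod_type]
      apply Finset.sum_congr rfl
      intro S _
      dsimp only
      rcases eq_or_ne (W S) 0 with h | h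
      · simp [h]
      · rw [klDiv, Finset.mul_sum]
        apply Finset.sum_congr rfl
        intro v _
        rcases eq_or_ne (Y S v) 0 with hy | hy
        · simp [hy, h]
        · rw [if_pos (mul_ne_zero h hy), if_pos hy, mul_div_mul_left _ _ h]
          ring)
  rw [Fintype.sum_prod_type] at key
  refine le_trans key (le_of_eq ?_)
  exact Finset.sum_congr rfl fun S _ => by
    dsimp only
    rw [Finset.mul_sum]
    exact Finset.sum_congr rfl fun v _ => by ring


/-- Product of single marginals on a tuple is at most the full-product-measure mass
of the compatible assignments, for consistent value tuples. -/
lemma prod_marg_le {V A : Type*} [Fintype V] [Fintype A] [Nonempty A] {k : ℕ} (hk : 0 < k)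
    (m : V → A → ℝ) (hm0 : ∀ x c, 0 ≤ m x c) (hm1 : ∀ x c, m x c ≤ 1)
    (hmsum : ∀ x, ∑ c, m x c = 1)
    (S : Fin k → V) (v : Fin k → A) (hcons : ∀ i j, S i = S j → v i = v j) :
    ∏ i, m (S i) (v i) ≤
      ∑ φ : V → A, if ∀ i, φ (S i) = v i then ∏ x, m x (φ x) else 0 := by
  set T := Finset.image S Finset.univ with hT
  have hex : ∀ x ∈ T, ∃ i, S i = x := by
    intro x hx
    obtain ⟨i, -, rfl⟩ := Finset.mem_image.mp hx
    exact ⟨i, rfl⟩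
  set vt : V → A := fun x => if h : ∃ i, S i = x then v h.choose else Classical.arbitrary A
    with hvtdef
  have hvt : ∀ i, vt (S i) = v i := by
    intro i
    have h : ∃ j, S j = S i := ⟨i, rfl⟩
    rw [hvtdef]
    simp only
    rw [dif_pos h]
    exact hcons _ _ h.choose_spec
  have step1 : (∑ φ : V → A, if ∀ i, φ (S i) = v i then ∏ x, m x (φ x) else 0)
      = ∑ φ : V → A, ∏ x, (if x ∈ T then (if φ x = vt x then m x (φ x) else 0)
          else m x (φ x)) := by
    apply Finset.sum_congr rfl
    intro φ _
    by_cases hc : ∀ i, φ (S i) = v i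
    · rw [if_pos hc]
      apply Finset.prod_congr rfl
      intro x _
      by_cases hx : x ∈ T
      · rw [if_pos hx, if_pos]
        obtain ⟨i, rfl⟩ := hex x hx
        rw [hvt i]
        exact hc i
      · rw [if_neg hx]
    · rw [if_neg hc]
      push_neg at hc
      obtain ⟨i, hi⟩ := hc
      symm
      apply Finset.prod_eq_zero (Finset.mem_univ (S i))
      have hmem : S i ∈ T := Finset.mem_image.mpr ⟨i, Finset.mem_univ i, rfl⟩
      rw [if_pos hmem, if_neg]
      rw [hvt i]
      exact hi
  have step2 : (∏ x : V, ∑ c : A, (if x ∈ T then (if c = vt x then m x c else 0) else m x c))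
      = ∑ φ : V → A, ∏ x, (if x ∈ T then (if φ x = vt x then m x (φ x) else 0)
          else m x (φ x)) := by
    rw [Finset.prod_univ_sum, Fintype.piFinset_univ]
  have step3 : ∀ x : V, (∑ c : A, (if x ∈ T then (if c = vt x then m x c else 0) else m x c))
      = if x ∈ T then m x (vt x) else 1 := by
    intro x
    by_cases hx : x ∈ T
    · simp only [if_pos hx]
      rw [Finset.sum_ite_eq' Finset.univ (vt x) (m x), if_pos (Finset.mem_univ _)]
    · simp only [if_neg hx]
      exact hmsum x
  set r : V → Fin k := fun x => if h : ∃ i, S i = x then h.choose else ⟨0, hk⟩ with hrdef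
  have hr : ∀ x ∈ T, S (r x) = x := by
    intro x hx
    rw [hrdef]
    simp only
    rw [dif_pos (hex x hx)]
    exact (hex x hx).choose_spec
  have hrinj : ∀ x ∈ T, ∀ y ∈ T, r x = r y → x = y := by
    intro x hx y hy hxy
    rw [← hr x hx, ← hr y hy, hxy]
  have heq : (∏ x ∈ T, m x (vt x)) = ∏ i ∈ T.image r, m (S i) (v i) := by
    rw [Finset.prod_image hrinj]
    apply Finset.prod_congr rfl
    intro x hx
    have h1 := hvt (r x)
    rw [hr x hx] at h1
    rw [hr x hx, ← h1]
  calc ∏ i, m (S i) (v i)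
      ≤ ∏ i ∈ T.image r, m (S i) (v i) := by
        have hsub : T.image r ⊆ Finset.univ := Finset.subset_univ _
        rw [← Finset.prod_sdiff hsub]
        have hA : (∏ i ∈ Finset.univ \ T.image r, m (S i) (v i)) ≤ 1 :=
          Finset.prod_le_one (fun i _ => hm0 _ _) (fun i _ => hm1 _ _)
        have hB : (0:ℝ) ≤ ∏ i ∈ T.image r, m (S i) (v i) :=
          Finset.prod_nonneg fun i _ => hm0 _ _
        exact mul_le_of_le_one_left hB hA
    _ = ∏ x ∈ T, m x (vt x) := heq.symm
    _ = ∏ x : V, (if x ∈ T then m x (vt x) else 1) := by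
        rw [Finset.prod_ite_mem, Finset.univ_inter]
    _ = ∏ x : V, ∑ c : A, (if x ∈ T then (if c = vt x then m x c else 0) else m x c) := by
        exact Finset.prod_congr rfl fun x _ => (step3 x).symm
    _ = ∑ φ : V → A, ∏ x, (if x ∈ T then (if φ x = vt x then m x (φ x) else 0)
          else m x (φ x)) := step2
    _ = ∑ φ : V → A, if ∀ i, φ (S i) = v i then ∏ x, m x (φ x) else 0 := step1.symm

/-- **Independent rounding of a `κ`-independent Sherali–Adams solution.**
A `k`-level SA solution is encoded as a family `μ S` of probability distributions over full
assignments `V → A` (one for each `S : Finset V` with `|S| ≤ k`), whose marginals agree on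
intersections; `μ S` represents the local distribution `X_S` through its marginal on `S`.
The predicates `P` take the tuple of values at the `k` positions of a constraint and
vanish on tuples giving two different values to a repeated variable.  If the solution has
value `1 − δ` and is `κ`-independent (the expected total correlation
`E_{S∼W}[D_KL(joint‖product of marginals)]` is at most `κ`), then the expectation of the
predicate under the product of the single-variable marginals is at least
`(δ^δ·e^{−κ})^{1/(1−δ)}·(1 − δ)` (with real powers, so `0^0 = 1` and the bound degenerates
to `0` at `δ = 1`); consequently some assignment has at least this value. -/
theorem independent_rounding_of_kappa_independent
    {V A : Type*} [Fintype V] [Fintype A] [Nonempty A] {k : ℕ}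
    (μ : Finset V → (V → A) → ℝ)
    (hμ0 : ∀ S φ, 0 ≤ μ S φ)
    (hμ1 : ∀ S : Finset V, S.card ≤ k → ∑ φ : V → A, μ S φ = 1)
    (hμmarg : ∀ S T : Finset V, S.card ≤ k → T.card ≤ k → ∀ ψ : V → A,
      (∑ φ : V → A, if ∀ a ∈ S ∩ T, φ a = ψ a then μ S φ else 0) =
        (∑ φ : V → A, if ∀ a ∈ S ∩ T, φ a = ψ a then μ T φ else 0))
    (W : (Fin k → V) → ℝ) (hW0 : ∀ S, 0 ≤ W S) (hW1 : ∑ S : Fin k → V, W S = 1)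
    (P : (Fin k → V) → (Fin k → A) → ℝ)
    (hP0 : ∀ S v, 0 ≤ P S v) (hP1 : ∀ S v, P S v ≤ 1)
    (hPrep : ∀ (S : Fin k → V) (v : Fin k → A),
      (∃ i j, S i = S j ∧ v i ≠ v j) → P S v = 0)
    (δ κ : ℝ)
    (hval : ∑ S : Fin k → V, W S *
        (∑ φ : V → A, μ (Finset.image S Finset.univ) φ * P S (fun i => φ (S i))) = 1 - δ)
    (hκ : ∑ S : Fin k → V, W S *
        klDiv
          (fun v : Fin k → A =>
            ∑ φ : V → A,
              if ∀ i, φ (S i) = v i then μ (Finset.image S Finset.univ) φ else 0)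
          (fun v : Fin k → A =>
            ∏ i, ∑ φ : V → A, if φ (S i) = v i then μ {S i} φ else 0) ≤ κ) :
    (δ ^ δ * Real.exp (-κ)) ^ ((1 : ℝ) / (1 - δ)) * (1 - δ) ≤
        ∑ S : Fin k → V, W S *
          (∑ v : Fin k → A,
            (∏ i, ∑ φ : V → A, if φ (S i) = v i then μ {S i} φ else 0) * P S v) ∧
      ∃ φ : V → A,
        (δ ^ δ * Real.exp (-κ)) ^ ((1 : ℝ) / (1 - δ)) * (1 - δ) ≤
          ∑ S : Fin k → V, W S * P S (fun i => φ (S i)) := by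
  classical
  -- single-variable marginals are nonnegative
  have hm0 : ∀ (x : V) (c : A),
      (0:ℝ) ≤ ∑ φ : V → A, if φ x = c then μ {x} φ else 0 := fun x c =>
    Finset.sum_nonneg fun φ _ => by split_ifs; exacts [hμ0 _ _, le_rfl]
  have hY0 : ∀ (S : Fin k → V) (v : Fin k → A),
      (0:ℝ) ≤ ∑ φ : V → A,
        if ∀ i, φ (S i) = v i then μ (Finset.image S Finset.univ) φ else 0 := fun S v =>
    Finset.sum_nonneg fun φ _ => by split_ifs; exacts [hμ0 _ _, le_rfl]
  have hQ0 : ∀ (S : Fin k → V) (v : Fin k → A),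
      (0:ℝ) ≤ ∏ i, ∑ φ : V → A, if φ (S i) = v i then μ {S i} φ else 0 := fun S v =>
    Finset.prod_nonneg fun i _ => hm0 _ _
  have hcardim : ∀ S : Fin k → V, (Finset.image S Finset.univ).card ≤ k := fun S =>
    le_trans Finset.card_image_le (by simp)
  -- single marginals sum to one (when k ≥ 1)
  have hmsum : ∀ (x : V), 1 ≤ k →
      (∑ c : A, ∑ φ : V → A, if φ x = c then μ {x} φ else 0) = 1 := by
    intro x hx
    rw [Finset.sum_comm]
    have h1 : ∀ φ : V → A, (∑ c : A, if φ x = c then μ {x} φ else 0) = μ {x} φ := fun φ => by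
      rw [Finset.sum_ite_eq, if_pos (Finset.mem_univ _)]
    rw [Finset.sum_congr rfl fun φ _ => h1 φ]
    exact hμ1 {x} (by simpa using hx)
  -- joint local distributions sum to one
  have hY1 : ∀ S : Fin k → V,
      (∑ v : Fin k → A, ∑ φ : V → A,
        if ∀ i, φ (S i) = v i then μ (Finset.image S Finset.univ) φ else 0) = 1 := by
    intro S
    calc (∑ v : Fin k → A, ∑ φ : V → A,
          if ∀ i, φ (S i) = v i then μ (Finset.image S Finset.univ) φ else 0)
        = ∑ v : Fin k → A, (∑ φ : V → A,
            if ∀ i, φ (S i) = v i then μ (Finset.image S Finset.univ) φ else 0) * 1 := by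
          simp
      _ = ∑ φ : V → A, μ (Finset.image S Finset.univ) φ * 1 :=
          joint_sum (μ (Finset.image S Finset.univ)) S (fun _ => 1)
      _ = 1 := by
          simpa using hμ1 _ (hcardim S)
  -- product distributions sum to one
  have hQ1 : ∀ S : Fin k → V,
      (∑ v : Fin k → A, ∏ i, ∑ φ : V → A, if φ (S i) = v i then μ {S i} φ else 0) = 1 := by
    intro S
    have h2 : (∏ i : Fin k, ∑ c : A, ∑ φ : V → A, if φ (S i) = c then μ {S i} φ else 0)
        = ∑ v : Fin k → A, ∏ i, ∑ φ : V → A, if φ (S i) = v i then μ {S i} φ else 0 := by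
      rw [Finset.prod_univ_sum, Fintype.piFinset_univ]
    rw [← h2]
    exact Finset.prod_eq_one fun i _ => hmsum (S i) i.pos
  -- absolute continuity
  have habs : ∀ (S : Fin k → V) (v : Fin k → A),
      (∏ i, ∑ φ : V → A, if φ (S i) = v i then μ {S i} φ else 0) = 0 →
      (∑ φ : V → A,
        if ∀ i, φ (S i) = v i then μ (Finset.image S Finset.univ) φ else 0) = 0 := by
    intro S v h
    obtain ⟨i, -, hi⟩ := Finset.prod_eq_zero_iff.mp h
    have hsub : ({S i} : Finset V) ⊆ Finset.image S Finset.univ :=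
      Finset.singleton_subset_iff.mpr (Finset.mem_image.mpr ⟨i, Finset.mem_univ i, rfl⟩)
    have hmarg := hμmarg (Finset.image S Finset.univ) {S i} (hcardim S)
      (by rw [Finset.card_singleton]; exact i.pos) (fun _ => v i)
    rw [Finset.inter_eq_right.mpr hsub] at hmarg
    simp only [Finset.mem_singleton, forall_eq] at hmarg
    have hle : (∑ φ : V → A,
          if ∀ i', φ (S i') = v i' then μ (Finset.image S Finset.univ) φ else 0)
        ≤ ∑ φ : V → A, if φ (S i) = v i then μ (Finset.image S Finset.univ) φ else 0 := by
      apply Finset.sum_le_sum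
      intro φ _
      by_cases hc : ∀ i', φ (S i') = v i'
      · rw [if_pos hc, if_pos (hc i)]
      · rw [if_neg hc]
        split_ifs
        exacts [hμ0 _ _, le_rfl]
    rw [hmarg, hi] at hle
    exact le_antisymm hle (hY0 S v)
  -- value hypothesis in joint form
  have hval' : (∑ S : Fin k → V, W S * ∑ v : Fin k → A,
      (∑ φ : V → A,
        if ∀ i, φ (S i) = v i then μ (Finset.image S Finset.univ) φ else 0) * P S v)
      = 1 - δ := by
    rw [← hval]
    exact Finset.sum_congr rfl fun S _ => by
      rw [joint_sum (μ (Finset.image S Finset.univ)) S (P S)]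
  -- main inequality via the product space
  have main :
      (δ ^ δ * Real.exp (-κ)) ^ ((1 : ℝ) / (1 - δ)) * (1 - δ) ≤
        ∑ S : Fin k → V, W S *
          (∑ v : Fin k → A,
            (∏ i, ∑ φ : V → A, if φ (S i) = v i then μ {S i} φ else 0) * P S v) :=
    sa_core W hW0 hW1 _ _ P hY0 hQ0 hY1 hQ1 habs hP0 hP1 δ κ hval' hκ
  refine ⟨main, ?_⟩
  rcases Nat.eq_zero_or_pos k with hk | hk
  · subst hk
    refine ⟨fun _ => Classical.arbitrary A, le_trans main (le_of_eq ?_)⟩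
    apply Finset.sum_congr rfl
    intro S _
    congr 1
    rw [Fintype.sum_unique]
    have hd : (default : Fin 0 → A) = fun i => (fun _ : V => Classical.arbitrary A) (S i) :=
      Subsingleton.elim _ _
    rw [hd]
    simp
  · -- independent rounding distribution
    obtain ⟨φ₀, -, hmax⟩ := Finset.exists_max_image (Finset.univ : Finset (V → A))
      (fun φ => ∑ S : Fin k → V, W S * P S (fun i => φ (S i)))
      ⟨Classical.arbitrary _, Finset.mem_univ _⟩
    refine ⟨φ₀, le_trans main ?_⟩
    have hm1 : ∀ (x : V) (c : A), (∑ φ : V → A, if φ x = c then μ {x} φ else 0) ≤ 1 := by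
      intro x c
      calc (∑ φ : V → A, if φ x = c then μ {x} φ else 0)
          ≤ ∑ c' : A, ∑ φ : V → A, if φ x = c' then μ {x} φ else 0 :=
            Finset.single_le_sum (fun c' _ => hm0 x c') (Finset.mem_univ c)
        _ = 1 := hmsum x hk
    have hν0 : ∀ φ : V → A,
        (0:ℝ) ≤ ∏ x : V, ∑ ψ : V → A, if ψ x = φ x then μ {x} ψ else 0 := fun φ =>
      Finset.prod_nonneg fun x _ => hm0 _ _
    have hν1 : (∑ φ : V → A, ∏ x : V, ∑ ψ : V → A, if ψ x = φ x then μ {x} ψ else 0) = 1 := by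
      have h2 : (∏ x : V, ∑ c : A, ∑ ψ : V → A, if ψ x = c then μ {x} ψ else 0)
          = ∑ φ : V → A, ∏ x : V, ∑ ψ : V → A, if ψ x = φ x then μ {x} ψ else 0 := by
        rw [Finset.prod_univ_sum, Fintype.piFinset_univ]
      rw [← h2]
      exact Finset.prod_eq_one fun x _ => hmsum x hk
    calc ∑ S : Fin k → V, W S *
          (∑ v : Fin k → A,
            (∏ i, ∑ φ : V → A, if φ (S i) = v i then μ {S i} φ else 0) * P S v)
        ≤ ∑ S : Fin k → V, W S *
          (∑ v : Fin k → A,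
            (∑ φ : V → A, if ∀ i, φ (S i) = v i
              then ∏ x : V, ∑ ψ : V → A, if ψ x = φ x then μ {x} ψ else 0 else 0) * P S v) := by
          apply Finset.sum_le_sum
          intro S _
          apply mul_le_mul_of_nonneg_left _ (hW0 S)
          apply Finset.sum_le_sum
          intro v _
          rcases eq_or_ne (P S v) 0 with hP | hP
          · rw [hP, mul_zero, mul_zero]
          · apply mul_le_mul_of_nonneg_right _ (hP0 S v)
            apply prod_marg_le hk _ hm0 hm1 (fun x => hmsum x hk) S v
            intro i j hij
            by_contra hne
            exact hP (hPrep S v ⟨i, j, hij, hne⟩)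
      _ = ∑ S : Fin k → V, W S *
          (∑ φ : V → A, (∏ x : V, ∑ ψ : V → A, if ψ x = φ x then μ {x} ψ else 0) *
            P S (fun i => φ (S i))) := by
          exact Finset.sum_congr rfl fun S _ => by
            rw [joint_sum (fun φ => ∏ x : V, ∑ ψ : V → A, if ψ x = φ x then μ {x} ψ else 0)
              S (P S)]
      _ = ∑ φ : V → A, (∏ x : V, ∑ ψ : V → A, if ψ x = φ x then μ {x} ψ else 0) *
            ∑ S : Fin k → V, W S * P S (fun i => φ (S i)) := by
          simp only [Finset.mul_sum]
          rw [Finset.sum_comm]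
          exact Finset.sum_congr rfl fun φ _ => Finset.sum_congr rfl fun S _ => by ring
      _ ≤ ∑ φ : V → A, (∏ x : V, ∑ ψ : V → A, if ψ x = φ x then μ {x} ψ else 0) *
            ∑ S : Fin k → V, W S * P S (fun i => φ₀ (S i)) := by
          apply Finset.sum_le_sum
          intro φ _
          exact mul_le_mul_of_nonneg_left (hmax φ (Finset.mem_univ φ)) (hν0 φ)
      _ = ∑ S : Fin k → V, W S * P S (fun i => φ₀ (S i)) := by
          rw [← Finset.sum_mul, hν1, one_mul]
end
end
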